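/- Product of maximal functions is an A_1 weight: let 1 < s_1, s_2 < ∞ with 1/s_1 + 1/s_2 < 1, and let f_1, f_2 be nonnegative locally integrable functions with M(f_i) finite a.e. Then M(f_1)^{1/s_1} M(f_2)^{1/s_2} ∈ A_1, i.e., there is a constant C (depending only on d, s_1, s_2) with (1/|Q|)∫_Q M(f_1)^{1/s_1} M(f_2)^{1/s_2} dy ≤ C M(f_1)(x)^{1/s_1} M(f_2)(x)^{1/s_2} for every cube Q and almost every x ∈ Q. -/

import Mathlib

open MeasureTheory ENNReal

noncomputable section

/-- Euclidean space `ℝ^d`. -/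
abbrev Rd (d : ℕ) := EuclideanSpace ℝ (Fin d)

/-- The (closed) cube with center `c` and half side-length `r`. -/
def cube {d : ℕ} (c : Rd d) (r : ℝ) : Set (Rd d) := {x | ∀ i, |x i - c i| ≤ r}

/-- Average `⟨f⟩_Q = (1/|Q|) ∫_Q f`. -/
def avg {d : ℕ} (Q : Set (Rd d)) (f : Rd d → ℝ≥0∞) : ℝ≥0∞ :=
  (∫⁻ x in Q, f x) / volume Q

/-- Essential supremum of `f` on `Q`. -/
def esssupQ {d : ℕ} (Q : Set (Rd d)) (f : Rd d → ℝ≥0∞) : ℝ≥0∞ :=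
  essSup f (volume.restrict Q)

/-- The conjugate exponent `t' = t/(t-1)`. -/
def conjE (t : ℝ) : ℝ := t / (t - 1)

/-- Hardy–Littlewood maximal function `M f (x) = sup_{Q ∋ x} ⟨f⟩_Q`. -/
def hlMax {d : ℕ} (f : Rd d → ℝ≥0∞) (x : Rd d) : ℝ≥0∞ :=
  ⨆ (c : Rd d) (r : ℝ) (_ : 0 < r) (_ : x ∈ cube c r), avg (cube c r) f

namespace A1

open Set Metric

variable {d : ℕ}

lemma cube_eq_preimage (c : Rd d) (r : ℝ) :
    cube c r = ((MeasurableEquiv.toLp 2 (Fin d → ℝ)).symm) ⁻¹'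
      (Set.univ.pi fun i => Icc (c i - r) (c i + r)) := by
  ext x
  simp only [cube, mem_setOf_eq, mem_preimage, mem_pi, mem_univ, forall_true_left, mem_Icc]
  change (∀ i, |x i - c i| ≤ r) ↔ ∀ i, c i - r ≤ x i ∧ x i ≤ c i + r
  constructor
  · intro h i; have := abs_le.1 (h i); constructor <;> linarith [this.1, this.2]
  · intro h i; rw [abs_le]; have := h i; constructor <;> linarith [this.1, this.2]

lemma volume_cube (c : Rd d) (r : ℝ) (hr : 0 ≤ r) :
    volume (cube c r) = ENNReal.ofReal (2 * r) ^ d := by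
  rw [cube_eq_preimage]
  rw [(EuclideanSpace.volume_preserving_symm_measurableEquiv_toLp (Fin d)).measure_preimage
    (by measurability)]
  rw [volume_pi_pi]
  simp only [Real.volume_Icc]
  rw [Finset.prod_congr rfl (fun i _ => by rw [show c i + r - (c i - r) = 2 * r by ring]),
    Finset.prod_const, Finset.card_univ, Fintype.card_fin]

lemma measurableSet_cube (c : Rd d) (r : ℝ) : MeasurableSet (cube c r) := by
  rw [cube_eq_preimage]
  exact ((MeasurableEquiv.toLp 2 (Fin d → ℝ)).symm).measurable (by measurability)

lemma abs_coord_le_norm (x y : Rd d) (i : Fin d) : |x i - y i| ≤ ‖x - y‖ := by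
  have : x - y = fun j => x j - y j := rfl
  rw [EuclideanSpace.norm_eq]
  calc |x i - y i| = Real.sqrt (|x i - y i| ^ 2) := by
        rw [Real.sqrt_sq_eq_abs, abs_abs]
      _ ≤ _ := by
        apply Real.sqrt_le_sqrt
        have hxy : ∀ j, ‖(x - y) j‖ = |x j - y j| := fun j => rfl
        calc |x i - y i| ^ 2 = ‖(x - y) i‖ ^ 2 := by rw [hxy]
          _ ≤ ∑ j, ‖(x - y) j‖ ^ 2 := Finset.single_le_sum (f := fun j => ‖(x-y) j‖^2)
              (fun j _ => by positivity) (Finset.mem_univ i)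

lemma cube_subset_cube (c : Rd d) {r R : ℝ} (h : r ≤ R) : cube c r ⊆ cube c R :=
  fun x hx i => (hx i).trans h

lemma mem_cube_center (c : Rd d) {r : ℝ} (hr : 0 ≤ r) : c ∈ cube c r := by
  intro i; simp [hr]

lemma volume_cube_pos (c : Rd d) {r : ℝ} (hr : 0 < r) : 0 < volume (cube c r) := by
  rw [volume_cube c r hr.le, pos_iff_ne_zero]
  exact pow_ne_zero d (by simp [hr])

lemma volume_cube_ne_top (c : Rd d) (r : ℝ) : volume (cube c r) ≠ ∞ := by
  rcases le_or_gt r 0 with h | h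
  · refine ne_top_of_le_ne_top ?_ (measure_mono (cube_subset_cube c (h.trans zero_le_one)))
    rw [volume_cube c 1 zero_le_one]; exact pow_ne_top (by simp)
  · rw [volume_cube c r h.le]; exact pow_ne_top (by simp [ENNReal.mul_eq_top])

lemma le_hlMax {f : Rd d → ℝ≥0∞} {x c : Rd d} {r : ℝ} (hr : 0 < r) (hx : x ∈ cube c r) :
    avg (cube c r) f ≤ hlMax f x := by
  refine le_trans ?_ (le_iSup _ c)
  refine le_trans ?_ (le_iSup _ r)
  refine le_trans ?_ (le_iSup _ hr)
  exact le_iSup (fun _ : x ∈ cube c r => avg (cube c r) f) hx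

lemma isOpen_hlMax_gt (f : Rd d → ℝ≥0∞) (t : ℝ≥0∞) :
    IsOpen {y : Rd d | t < hlMax f y} := by
  rcases eq_or_ne t ∞ with rfl | ht
  · convert isOpen_empty
    ext y; simp
  rw [Metric.isOpen_iff]
  intro y hy
  simp only [mem_setOf_eq, hlMax, lt_iSup_iff] at hy
  obtain ⟨c, r, hr, hyc, havg⟩ := hy
  have hint : t * volume (cube c r) < ∫⁻ z in cube c r, f z := by
    rw [mul_comm]
    exact ENNReal.mul_lt_of_lt_div' havg
  -- find r' > r with t * volume (cube c r') < ∫_{cube c r} f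
  have hOpen : IsOpen {ρ : ℝ | t * ENNReal.ofReal (2 * ρ) ^ d < ∫⁻ z in cube c r, f z} := by
    have hcont : Continuous fun ρ : ℝ => t * ENNReal.ofReal (2 * ρ) ^ d :=
      (ENNReal.continuous_const_mul ht).comp
        ((ENNReal.continuous_pow d).comp (ENNReal.continuous_ofReal.comp (by continuity)))
    exact isOpen_Iio.preimage hcont
  have hrmem : r ∈ {ρ : ℝ | t * ENNReal.ofReal (2 * ρ) ^ d < ∫⁻ z in cube c r, f z} := by
    rw [mem_setOf_eq, ← volume_cube c r hr.le]; exact hint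
  obtain ⟨ε, hε, hball⟩ := Metric.isOpen_iff.1 hOpen r hrmem
  set r' := r + ε / 2 with hr'
  have hr'mem : r' ∈ {ρ : ℝ | t * ENNReal.ofReal (2 * ρ) ^ d < ∫⁻ z in cube c r, f z} := by
    apply hball
    rw [Metric.mem_ball, Real.dist_eq, hr', show r + ε / 2 - r = ε / 2 by ring,
      abs_of_nonneg (by linarith : (0:ℝ) ≤ ε / 2)]
    linarith
  refine ⟨ε / 2, by linarith, fun z hz => ?_⟩
  have hzc : z ∈ cube c r' := by
    intro i
    calc |z i - c i| ≤ |z i - y i| + |y i - c i| := abs_sub_le _ _ _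
      _ ≤ ‖z - y‖ + r := by
          have := abs_coord_le_norm z y i
          have := hyc i
          linarith [abs_coord_le_norm z y i, hyc i]
      _ ≤ r' := by
          have : ‖z - y‖ < ε / 2 := by rw [← dist_eq_norm]; exact hz
          rw [hr']; linarith
  have hmono : (∫⁻ w in cube c r, f w) ≤ ∫⁻ w in cube c r', f w :=
    lintegral_mono_set (cube_subset_cube c (by rw [hr']; linarith))
  have hr'pos : (0:ℝ) < r' := by rw [hr']; linarith
  have : t < avg (cube c r') f := by
    rw [avg, ENNReal.lt_div_iff_mul_lt] <;>
      [skip;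
       exact Or.inl (volume_cube_pos c hr'pos).ne';
       exact Or.inl (volume_cube_ne_top c r')]
    calc t * volume (cube c r') = t * ENNReal.ofReal (2 * r') ^ d := by
          rw [volume_cube c r' hr'pos.le]
      _ < ∫⁻ w in cube c r, f w := hr'mem
      _ ≤ _ := hmono
  exact lt_of_lt_of_le this (le_hlMax hr'pos hzc)

lemma measurable_hlMax (f : Rd d → ℝ≥0∞) : Measurable (hlMax f) := by
  apply measurable_of_Ioi
  intro t
  exact (isOpen_hlMax_gt f t).measurableSet

lemma cube_subset_closedBall (c : Rd d) {r : ℝ} (hr : 0 ≤ r) :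
    cube c r ⊆ closedBall c (Real.sqrt d * r) := by
  intro x hx
  rw [mem_closedBall, dist_eq_norm, EuclideanSpace.norm_eq]
  rw [show Real.sqrt d * r = Real.sqrt (d * r ^ 2) by
    rw [Real.sqrt_mul (Nat.cast_nonneg d), Real.sqrt_sq hr]]
  apply Real.sqrt_le_sqrt
  calc ∑ i, ‖(x - c) i‖ ^ 2 ≤ ∑ _i : Fin d, r ^ 2 := by
        apply Finset.sum_le_sum
        intro i _
        have h1 : ‖(x - c) i‖ = |x i - c i| := rfl
        rw [h1, sq_abs, ← sq_abs]
        exact pow_le_pow_left₀ (abs_nonneg _) (hx i) 2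
    _ = d * r ^ 2 := by rw [Finset.sum_const, Finset.card_univ, Fintype.card_fin, nsmul_eq_mul]

lemma closedBall_subset_cube (c : Rd d) (r : ℝ) :
    closedBall c r ⊆ cube c r := by
  intro x hx i
  calc |x i - c i| ≤ ‖x - c‖ := abs_coord_le_norm x c i
    _ ≤ r := by rwa [mem_closedBall, dist_eq_norm] at hx

/-- Weak (1,1) bound for the cube maximal function. -/
lemma weak11 (hd : 0 < d) (g : Rd d → ℝ≥0∞) (t : ℝ≥0∞) (ht : 0 < t) (ht' : t ≠ ∞)
    (hI : (∫⁻ z, g z) ≠ ∞) :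
    volume {y : Rd d | t < hlMax g y} ≤
      ENNReal.ofReal (4 * Real.sqrt d) ^ d * ((∫⁻ z, g z) / t) := by
  set I := ∫⁻ z, g z with hIdef
  rcases eq_or_ne I 0 with hI0 | hI0
  · -- maximal function is identically zero
    have : ∀ y, hlMax g y = 0 := by
      intro y
      rw [hlMax]
      simp only [ENNReal.iSup_eq_zero]
      intro c r hr hx
      rw [avg, ENNReal.div_eq_zero_iff]
      left
      exact le_antisymm (le_trans (by exact lintegral_mono_set (subset_univ _))
        (by rw [Measure.restrict_univ]; exact hI0.le)) zero_le
    have hset : {y : Rd d | t < hlMax g y} = ∅ := by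
      ext y
      simp only [mem_setOf_eq, mem_empty_iff_false, iff_false, not_lt]
      rw [this y]; exact zero_le
    rw [hset]; simp
  -- index type: pairs (center, radius)
  set T : Set (Rd d × ℝ) := {p | 0 < p.2 ∧ t * volume (cube p.1 p.2) < ∫⁻ z in cube p.1 p.2, g z}
    with hT
  -- radii are bounded
  have hrad : ∀ p ∈ T, volume (cube p.1 p.2) < I / t := by
    rintro p ⟨hp1, hp2⟩
    rw [ENNReal.lt_div_iff_mul_lt (Or.inl ht.ne') (Or.inl ht'), mul_comm]
    exact lt_of_lt_of_le hp2 (lintegral_mono_set (subset_univ _)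
      |>.trans (by rw [Measure.restrict_univ]))
  have hIt_top : I / t ≠ ∞ := by
    simp [ENNReal.div_eq_top, ht.ne', hI]
  -- real radius bound
  set R : ℝ := (((I / t) ^ (1 / (d:ℝ))).toReal) / 2 + 1 with hR
  have hradR : ∀ p ∈ T, p.2 ≤ R := by
    rintro p hp
    have h1 : ENNReal.ofReal (2 * p.2) ^ d ≤ I / t := by
      rw [← volume_cube p.1 p.2 (hp.1.le)]
      exact (hrad p hp).le
    have h2 : ENNReal.ofReal (2 * p.2) ≤ (I / t) ^ (1 / (d:ℝ)) := by
      have := ENNReal.rpow_le_rpow (x := ENNReal.ofReal (2 * p.2) ^ d) (y := I / t)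
        h1 (z := 1 / (d:ℝ)) (by positivity)
      rwa [← ENNReal.rpow_natCast, ← ENNReal.rpow_mul,
        mul_one_div, div_self (by exact_mod_cast hd.ne'), ENNReal.rpow_one] at this
    have h3 : (I / t) ^ (1 / (d:ℝ)) ≠ ∞ := by
      exact ENNReal.rpow_ne_top_of_nonneg (by positivity) hIt_top
    have h4 : 2 * p.2 ≤ ((I / t) ^ (1 / (d:ℝ))).toReal := by
      rcases le_or_gt (2 * p.2) 0 with h | h
      · exact h.trans ENNReal.toReal_nonneg
      · rw [← ENNReal.ofReal_le_iff_le_toReal h3]; exact h2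
    rw [hR]; linarith
  -- Vitali covering
  obtain ⟨u, huT, hdisj, hcov⟩ :=
    Vitali.exists_disjoint_subfamily_covering_enlargement_closedBall T
      (fun p => p.1) (fun p => Real.sqrt d * p.2) (Real.sqrt d * R)
      (fun p hp => mul_le_mul_of_nonneg_left (hradR p hp) (Real.sqrt_nonneg d))
      4 (by norm_num)
  have hsqrtd : (0:ℝ) < Real.sqrt d := Real.sqrt_pos.2 (by exact_mod_cast hd)
  have hu_count : u.Countable := by
    apply hdisj.countable_of_nonempty_interior
    intro p hp
    have hp2 : 0 < p.2 := (huT hp).1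
    refine ⟨p.1, ?_⟩
    apply ball_subset_interior_closedBall
    exact Metric.mem_ball_self (by positivity)
  -- covering of the level set
  have hcover : {y : Rd d | t < hlMax g y} ⊆
      ⋃ b ∈ u, closedBall b.1 (4 * (Real.sqrt d * b.2)) := by
    intro y hy
    simp only [mem_setOf_eq, hlMax, lt_iSup_iff] at hy
    obtain ⟨c, r, hr, hyc, havg⟩ := hy
    have hpT : ((c, r) : Rd d × ℝ) ∈ T := by
      refine ⟨hr, ?_⟩
      rw [avg, ENNReal.lt_div_iff_mul_lt
        (Or.inl (volume_cube_pos c hr).ne') (Or.inl (volume_cube_ne_top c r))] at havg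
      exact havg
    obtain ⟨b, hb, hsub⟩ := hcov _ hpT
    refine mem_biUnion hb (hsub ?_)
    exact cube_subset_closedBall c hr.le hyc
  -- cubes of the subfamily are pairwise disjoint
  have hcube_disj : u.PairwiseDisjoint (fun b : Rd d × ℝ => cube b.1 b.2) := by
    intro b hb b' hb' hne
    exact Disjoint.mono (cube_subset_closedBall b.1 (huT hb).1.le)
      (cube_subset_closedBall b'.1 (huT hb').1.le) (hdisj hb hb' hne)
  -- volume estimate
  have Cd : ℝ≥0∞ := ENNReal.ofReal (4 * Real.sqrt d) ^ d
  calc volume {y : Rd d | t < hlMax g y}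
      ≤ volume (⋃ b ∈ u, closedBall b.1 (4 * (Real.sqrt d * b.2))) := measure_mono hcover
    _ ≤ ∑' b : u, volume (closedBall (b : Rd d × ℝ).1 (4 * (Real.sqrt d * (b : Rd d × ℝ).2))) :=
        measure_biUnion_le volume hu_count _
    _ ≤ ∑' b : u, ENNReal.ofReal (4 * Real.sqrt d) ^ d *
          ((∫⁻ z in cube (b : Rd d × ℝ).1 (b : Rd d × ℝ).2, g z) / t) := by
        apply ENNReal.tsum_le_tsum
        rintro ⟨b, hb⟩
        have hb2 : 0 < b.2 := (huT hb).1
        have step1 : volume (closedBall b.1 (4 * (Real.sqrt d * b.2))) ≤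
            volume (cube b.1 (4 * (Real.sqrt d * b.2))) :=
          measure_mono (closedBall_subset_cube b.1 _)
        have step2 : volume (cube b.1 (4 * (Real.sqrt d * b.2))) =
            ENNReal.ofReal (4 * Real.sqrt d) ^ d * volume (cube b.1 b.2) := by
          rw [volume_cube _ _ (by positivity), volume_cube _ _ hb2.le,
            show 2 * (4 * (Real.sqrt d * b.2)) = (4 * Real.sqrt d) * (2 * b.2) by ring,
            ENNReal.ofReal_mul (by positivity), mul_pow]
        have step3 : volume (cube b.1 b.2) ≤ (∫⁻ z in cube b.1 b.2, g z) / t := by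
          rw [ENNReal.le_div_iff_mul_le (Or.inl ht.ne') (Or.inl ht'), mul_comm]
          exact (huT hb).2.le
        calc volume (closedBall b.1 (4 * (Real.sqrt d * b.2)))
            ≤ ENNReal.ofReal (4 * Real.sqrt d) ^ d * volume (cube b.1 b.2) := by
              rw [← step2]; exact step1
          _ ≤ _ := mul_le_mul_right step3 _
    _ = ENNReal.ofReal (4 * Real.sqrt d) ^ d *
          ((∑' b : u, ∫⁻ z in cube (b : Rd d × ℝ).1 (b : Rd d × ℝ).2, g z) / t) := by
        rw [ENNReal.tsum_mul_left]
        congr 1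
        simp only [div_eq_mul_inv, ENNReal.tsum_mul_right]
    _ ≤ ENNReal.ofReal (4 * Real.sqrt d) ^ d * (I / t) := by
        apply mul_le_mul_right
        apply ENNReal.div_le_div_right
        rw [← lintegral_biUnion hu_count (fun b _ => measurableSet_cube b.1 b.2) hcube_disj]
        exact (lintegral_mono_set (subset_univ _)).trans (by rw [Measure.restrict_univ])

lemma hlMax_eq_zero_of_int_zero {g : Rd d → ℝ≥0∞} (hg : (∫⁻ z, g z) = 0) (y : Rd d) :
    hlMax g y = 0 := by
  rw [hlMax]
  simp only [ENNReal.iSup_eq_zero]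
  intro c r hr hx
  rw [avg, ENNReal.div_eq_zero_iff]
  left
  refine le_antisymm ?_ zero_le
  calc (∫⁻ z in cube c r, g z) ≤ ∫⁻ z, g z := by
        exact (lintegral_mono_set (subset_univ _)).trans (by rw [Measure.restrict_univ])
    _ = 0 := hg

lemma geom_ne_top {δ : ℝ} (hδ1 : δ < 1) : (1 - (2:ℝ≥0∞) ^ (δ - 1)) ⁻¹ ≠ ∞ := by
  rw [Ne, ENNReal.inv_eq_top, tsub_eq_zero_iff_le]
  exact fun h => absurd h (not_le.2 (ENNReal.rpow_lt_one_of_one_lt_of_neg (by norm_num) (by linarith)))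

/-- "Kolmogorov" inequality for the cube maximal function. -/
lemma kolmogorov (hd : 0 < d) {δ : ℝ} (hδ0 : 0 < δ) (hδ1 : δ < 1) (g : Rd d → ℝ≥0∞)
    (hI : (∫⁻ z, g z) ≠ ∞) (hfin : ∀ᵐ y ∂(volume : Measure (Rd d)), hlMax g y ≠ ∞)
    (c : Rd d) (r : ℝ) (hr : 0 < r) :
    (∫⁻ y in cube c r, hlMax g y ^ δ) ≤
      ((1 + (2:ℝ≥0∞) ^ δ * (1 - (2:ℝ≥0∞) ^ (δ - 1))⁻¹) *
        (ENNReal.ofReal (4 * Real.sqrt d) ^ d * (∫⁻ z, g z) / volume (cube c r)) ^ δ) *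
        volume (cube c r) := by
  set I := ∫⁻ z, g z with hIdef
  set A : ℝ≥0∞ := ENNReal.ofReal (4 * Real.sqrt d) ^ d with hA
  set Q := cube c r with hQ
  have hQ0 : volume Q ≠ 0 := (volume_cube_pos c hr).ne'
  have hQtop : volume Q ≠ ∞ := volume_cube_ne_top c r
  rcases eq_or_ne I 0 with hI0 | hI0
  · have : ∀ y, hlMax g y ^ δ = 0 := fun y => by
      rw [hlMax_eq_zero_of_int_zero hI0 y, ENNReal.zero_rpow_of_pos hδ0]
    simp only [this, lintegral_const, zero_mul]
    exact zero_le
  have hA0 : A ≠ 0 := pow_ne_zero d (by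
    simp only [Ne, ENNReal.ofReal_eq_zero, not_le]
    have : (0:ℝ) < Real.sqrt d := Real.sqrt_pos.2 (by exact_mod_cast hd)
    positivity)
  have hAtop : A ≠ ∞ := pow_ne_top ENNReal.ofReal_ne_top
  set lam : ℝ≥0∞ := A * I / volume Q with hlam
  have hlam0 : lam ≠ 0 := by
    rw [hlam, Ne, ENNReal.div_eq_zero_iff]
    push_neg
    exact ⟨mul_ne_zero hA0 hI0, hQtop⟩
  have hlamtop : lam ≠ ∞ := by
    rw [hlam, Ne, ENNReal.div_eq_top]
    push_neg
    exact ⟨fun _ => hQ0, fun h => absurd h (ENNReal.mul_ne_top hAtop hI)⟩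
  -- pointwise bound
  have hpt : ∀ᵐ y ∂(volume.restrict Q),
      hlMax g y ^ δ ≤ lam ^ δ + ∑' k : ℕ, (2 * ((2:ℝ≥0∞) ^ k * lam)) ^ δ *
        ({z : Rd d | (2:ℝ≥0∞) ^ k * lam < hlMax g z}.indicator (fun _ => 1) y) := by
    filter_upwards [ae_restrict_of_ae hfin] with y hy
    set v := hlMax g y with hv
    rcases le_or_gt v lam with h | h
    · calc v ^ δ ≤ lam ^ δ := ENNReal.rpow_le_rpow h hδ0.le
        _ ≤ _ := le_self_add
    · -- find the maximal k with 2^k * lam < v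
      have hP : ∃ n : ℕ, ¬((2:ℝ≥0∞) ^ n * lam < v) := by
        obtain ⟨n, hn⟩ := ENNReal.exists_nat_gt (r := v / lam) (by
          rw [Ne, ENNReal.div_eq_top]; push_neg
          exact ⟨fun _ => hlam0, fun h => absurd h hy⟩)
        refine ⟨n, not_lt.2 ?_⟩
        have hvn : v ≤ n * lam := by
          rw [← ENNReal.div_le_iff hlam0 hlamtop]
          exact hn.le
        calc v ≤ n * lam := hvn
          _ ≤ 2 ^ n * lam := by
              apply mul_le_mul_left
              have h2 : (n:ℝ≥0∞) ≤ ((2 ^ n : ℕ) : ℝ≥0∞) := Nat.cast_le.2 (Nat.lt_two_pow_self (n := n)).le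
              rwa [Nat.cast_pow, Nat.cast_ofNat] at h2
      set k0 := Nat.find hP with hk0
      have hk0pos : 0 < k0 := by
        rcases Nat.eq_zero_or_pos k0 with h0 | h0
        · exfalso
          have := Nat.find_spec hP
          rw [← hk0, h0] at this
          simp only [pow_zero, one_mul] at this
          exact this h
        · exact h0
      set k := k0 - 1 with hk
      have hklt : (2:ℝ≥0∞) ^ k * lam < v := by
        by_contra hcon
        exact Nat.find_min hP (show k < k0 by omega) hcon
      have hkge : v ≤ (2:ℝ≥0∞) ^ (k + 1) * lam := by
        have : k + 1 = k0 := by omega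
        rw [this]
        exact not_lt.1 (Nat.find_spec hP)
      have hterm : v ^ δ ≤ (2 * ((2:ℝ≥0∞) ^ k * lam)) ^ δ *
          ({z : Rd d | (2:ℝ≥0∞) ^ k * lam < hlMax g z}.indicator (fun _ => 1) y) := by
        have hyin : y ∈ {z : Rd d | (2:ℝ≥0∞) ^ k * lam < hlMax g z} := hklt
        rw [Set.indicator_of_mem hyin, mul_one]
        apply ENNReal.rpow_le_rpow _ hδ0.le
        calc v ≤ (2:ℝ≥0∞) ^ (k+1) * lam := hkge
          _ = 2 * ((2:ℝ≥0∞) ^ k * lam) := by rw [pow_succ]; ring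
      calc v ^ δ ≤ _ := hterm
        _ ≤ _ := le_add_self.trans (add_le_add_right (ENNReal.le_tsum k) _)
  -- integration
  set G : ℝ≥0∞ := (1 - (2:ℝ≥0∞) ^ (δ - 1))⁻¹ with hG
  have hmeasInd : ∀ k : ℕ, Measurable
      ({z : Rd d | (2:ℝ≥0∞) ^ k * lam < hlMax g z}.indicator (fun _ => (1:ℝ≥0∞))) :=
    fun k => measurable_const.indicator (isOpen_hlMax_gt g _).measurableSet
  have htk0 : ∀ k : ℕ, (0:ℝ≥0∞) < 2 ^ k * lam := fun k => by
    rw [pos_iff_ne_zero]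
    exact mul_ne_zero (pow_ne_zero k two_ne_zero) hlam0
  have htktop : ∀ k : ℕ, (2:ℝ≥0∞) ^ k * lam ≠ ∞ := fun k =>
    ENNReal.mul_ne_top (pow_ne_top ENNReal.ofNat_ne_top) hlamtop
  have hAI : A * I = lam * volume Q := by
    rw [hlam, ENNReal.div_mul_cancel hQ0 hQtop]
  have hlevel : ∀ k : ℕ, volume ({z : Rd d | (2:ℝ≥0∞) ^ k * lam < hlMax g z} ∩ Q) ≤
      volume Q / 2 ^ k := by
    intro k
    calc volume ({z : Rd d | (2:ℝ≥0∞) ^ k * lam < hlMax g z} ∩ Q)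
        ≤ volume {z : Rd d | (2:ℝ≥0∞) ^ k * lam < hlMax g z} :=
          measure_mono inter_subset_left
      _ ≤ A * (I / (2 ^ k * lam)) := weak11 hd g _ (htk0 k) (htktop k) hI
      _ = volume Q / 2 ^ k := by
          rw [← mul_div_assoc, hAI, mul_comm lam (volume Q),
            ENNReal.mul_div_mul_right _ _ hlam0 hlamtop]
  have step1 : (∫⁻ y in Q, hlMax g y ^ δ) ≤
      lam ^ δ * volume Q + ∑' k : ℕ, (2 * ((2:ℝ≥0∞) ^ k * lam)) ^ δ *
        volume ({z : Rd d | (2:ℝ≥0∞) ^ k * lam < hlMax g z} ∩ Q) := by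
    calc (∫⁻ y in Q, hlMax g y ^ δ)
        ≤ ∫⁻ y in Q, (lam ^ δ + ∑' k : ℕ, (2 * ((2:ℝ≥0∞) ^ k * lam)) ^ δ *
            ({z : Rd d | (2:ℝ≥0∞) ^ k * lam < hlMax g z}.indicator (fun _ => 1) y)) :=
          lintegral_mono_ae hpt
      _ = lam ^ δ * volume Q + ∑' k : ℕ, (2 * ((2:ℝ≥0∞) ^ k * lam)) ^ δ *
            volume ({z : Rd d | (2:ℝ≥0∞) ^ k * lam < hlMax g z} ∩ Q) := by
          rw [lintegral_add_left measurable_const, lintegral_const,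
            Measure.restrict_apply_univ]
          congr 1
          rw [lintegral_tsum (fun k => ((hmeasInd k).const_mul _).aemeasurable)]
          congr 1
          funext k
          rw [lintegral_const_mul _ (hmeasInd k)]
          congr 1
          rw [lintegral_indicator ((isOpen_hlMax_gt g _).measurableSet),
            setLIntegral_one, Measure.restrict_apply ((isOpen_hlMax_gt g _).measurableSet)]
  have hterm_eq : ∀ k : ℕ, (2 * ((2:ℝ≥0∞) ^ k * lam)) ^ δ * (volume Q / 2 ^ k) =
      ((2:ℝ≥0∞) ^ δ * lam ^ δ * volume Q) * ((2:ℝ≥0∞) ^ (δ - 1)) ^ k := by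
    intro k
    have h2k : ((2:ℝ≥0∞) ^ k) ^ δ * ((2:ℝ≥0∞) ^ k)⁻¹ = ((2:ℝ≥0∞) ^ (δ - 1)) ^ k := by
      rw [← ENNReal.rpow_natCast 2 k, ← ENNReal.rpow_mul, ← ENNReal.rpow_neg,
        ← ENNReal.rpow_add _ _ two_ne_zero ENNReal.ofNat_ne_top,
        show (k:ℝ) * δ + -(k:ℝ) = (δ - 1) * (k:ℝ) by ring,
        ENNReal.rpow_mul, ENNReal.rpow_natCast]
    rw [ENNReal.mul_rpow_of_nonneg _ _ hδ0.le, ENNReal.mul_rpow_of_nonneg _ _ hδ0.le,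
      div_eq_mul_inv, ← h2k]
    ring
  have step2 : (∑' k : ℕ, (2 * ((2:ℝ≥0∞) ^ k * lam)) ^ δ *
        volume ({z : Rd d | (2:ℝ≥0∞) ^ k * lam < hlMax g z} ∩ Q)) ≤
      ((2:ℝ≥0∞) ^ δ * lam ^ δ * volume Q) * G := by
    calc (∑' k : ℕ, (2 * ((2:ℝ≥0∞) ^ k * lam)) ^ δ *
          volume ({z : Rd d | (2:ℝ≥0∞) ^ k * lam < hlMax g z} ∩ Q))
        ≤ ∑' k : ℕ, ((2:ℝ≥0∞) ^ δ * lam ^ δ * volume Q) * ((2:ℝ≥0∞) ^ (δ - 1)) ^ k := by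
          apply ENNReal.tsum_le_tsum
          intro k
          rw [← hterm_eq k]
          exact mul_le_mul_right (hlevel k) _
      _ = ((2:ℝ≥0∞) ^ δ * lam ^ δ * volume Q) * G := by
          rw [ENNReal.tsum_mul_left, ENNReal.tsum_geometric]
  calc (∫⁻ y in Q, hlMax g y ^ δ)
      ≤ lam ^ δ * volume Q + ((2:ℝ≥0∞) ^ δ * lam ^ δ * volume Q) * G :=
        step1.trans (add_le_add_right step2 _)
    _ = ((1 + (2:ℝ≥0∞) ^ δ * G) * lam ^ δ) * volume Q := by ring

lemma hlMax_mono {f g : Rd d → ℝ≥0∞} (h : ∀ z, g z ≤ f z) (y : Rd d) :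
    hlMax g y ≤ hlMax f y := by
  rw [hlMax, hlMax]
  refine iSup_mono fun c => iSup_mono fun r => iSup_mono fun hr => iSup_mono fun hy => ?_
  rw [avg, avg]
  exact ENNReal.div_le_div_right (lintegral_mono fun z => h z) _

/-- integrals over cubes are finite when the maximal function is finite a.e. -/
lemma lintegral_cube_ne_top (hd : 0 < d) (f : Rd d → ℝ≥0∞)
    (hfin : ∀ᵐ y ∂(volume : Measure (Rd d)), hlMax f y ≠ ∞) (c : Rd d) {R : ℝ} (hR : 0 < R) :
    (∫⁻ z in cube c R, f z) ≠ ∞ := by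
  by_contra h
  have hall : ∀ y : Rd d, hlMax f y = ∞ := by
    intro y
    set ρ : ℝ := R + ‖y - c‖ with hρ
    have hρpos : 0 < ρ := by positivity
    have hyρ : y ∈ cube c ρ := fun i =>
      (abs_coord_le_norm y c i).trans (by rw [hρ]; linarith [norm_nonneg (y - c)])
    have hsub : cube c R ⊆ cube c ρ :=
      cube_subset_cube c (by rw [hρ]; linarith [norm_nonneg (y - c)])
    refine top_le_iff.1 ?_
    refine le_trans ?_ (le_hlMax hρpos hyρ)
    rw [avg, top_le_iff, ENNReal.div_eq_top]
    right
    refine ⟨top_le_iff.1 ?_, volume_cube_ne_top c ρ⟩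
    rw [← h]
    exact lintegral_mono_set hsub
  have h0 : volume {y : Rd d | ¬ hlMax f y ≠ ∞} = 0 := hfin
  have huniv : {y : Rd d | ¬ hlMax f y ≠ ∞} = univ := by
    ext y; simp [hall y]
  rw [huniv] at h0
  have : volume (cube c 1) ≤ (0:ℝ≥0∞) := h0 ▸ measure_mono (subset_univ _)
  exact absurd (le_antisymm this zero_le) (volume_cube_pos c one_pos).ne'





lemma hlMax_le_local_add (f : Rd d → ℝ≥0∞) (c x y : Rd d) {r : ℝ} (hr : 0 < r)
    (hx : x ∈ cube c r) (hy : y ∈ cube c r) :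
    hlMax f y ≤ hlMax ((cube c (3 * r)).indicator f) y + (3:ℝ≥0∞) ^ d * hlMax f x := by
  set g := (cube c (3 * r)).indicator f with hg
  rw [hlMax]
  refine iSup_le fun c' => iSup_le fun r' => iSup_le fun hr' => iSup_le fun hyc' => ?_
  by_cases hsub : cube c' r' ⊆ cube c (3 * r)
  · -- local case : the average of f equals the average of g
    have heq : (∫⁻ z in cube c' r', f z) = ∫⁻ z in cube c' r', g z := by
      refine setLIntegral_congr_fun (measurableSet_cube c' r') ?_
      intro z hz
      rw [hg, Set.indicator_of_mem (hsub hz)]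
    calc avg (cube c' r') f = avg (cube c' r') g := by rw [avg, avg, heq]
      _ ≤ hlMax g y := le_hlMax hr' hyc'
      _ ≤ _ := le_self_add
  · -- nonlocal case
    obtain ⟨z, hz1, hz2⟩ := not_subset.1 hsub
    obtain ⟨i, hi⟩ := by
      simpa only [cube, mem_setOf_eq, not_forall, not_le] using hz2
    have hzy : ∀ j, |z j - y j| ≤ 2 * r' := fun j =>
      (abs_sub_le _ (c' j) _).trans (by
        have h1 := hz1 j
        have h2 := hyc' j
        rw [abs_sub_comm (c' j) (y j)]
        linarith)
    have hyr : |y i - c i| ≤ r := hy i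
    have hrr' : r < r' := by
      have : 3 * r < |z i - c i| := hi
      have h3 : |z i - c i| ≤ |z i - y i| + |y i - c i| := abs_sub_le _ _ _
      have := hzy i
      linarith
    have hQ'sub : cube c' r' ⊆ cube c (3 * r') := by
      intro w hw j
      calc |w j - c j| ≤ |w j - y j| + |y j - c j| := abs_sub_le _ _ _
        _ ≤ (|w j - c' j| + |c' j - y j|) + r := by
            have h4 := abs_sub_le (w j) (c' j) (y j)
            have h5 := hy j
            linarith
        _ ≤ 3 * r' := by
            have h6 := hw j
            have h7 := hyc' j
            rw [abs_sub_comm (c' j) (y j)]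
            linarith
    have hx3 : x ∈ cube c (3 * r') :=
      cube_subset_cube c (show r ≤ 3 * r' by linarith) hx
    have h3r' : (0:ℝ) < 3 * r' := by linarith
    have hVol : volume (cube c (3 * r')) = (3:ℝ≥0∞) ^ d * volume (cube c' r') := by
      rw [volume_cube c (3*r') h3r'.le, volume_cube c' r' hr'.le,
        show 2 * (3 * r') = 3 * (2 * r') by ring, ENNReal.ofReal_mul (by norm_num),
        mul_pow]
      norm_num
    have key : avg (cube c' r') f ≤ (3:ℝ≥0∞) ^ d * avg (cube c (3 * r')) f := by
      rw [avg, avg, hVol, ← mul_div_assoc,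
        ENNReal.mul_div_mul_left _ _ (pow_ne_zero d (by norm_num))
          (pow_ne_top (by norm_num))]
      exact ENNReal.div_le_div_right (lintegral_mono_set hQ'sub) _
    calc avg (cube c' r') f ≤ (3:ℝ≥0∞) ^ d * avg (cube c (3 * r')) f := key
      _ ≤ (3:ℝ≥0∞) ^ d * hlMax f x := mul_le_mul_right (le_hlMax h3r' hx3) _
      _ ≤ _ := le_add_self

/-- Core estimate: average of `(hlMax f)^δ` over a cube is controlled by `hlMax f x ^ δ`
for every `x` in the cube. -/
lemma core (hd : 0 < d) {δ : ℝ} (hδ0 : 0 < δ) (hδ1 : δ < 1) (f : Rd d → ℝ≥0∞)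
    (hfin : ∀ᵐ y ∂(volume : Measure (Rd d)), hlMax f y ≠ ∞)
    (c : Rd d) (r : ℝ) (hr : 0 < r) (x : Rd d) (hx : x ∈ cube c r) :
    avg (cube c r) (fun y => hlMax f y ^ δ) ≤
      ((1 + (2:ℝ≥0∞) ^ δ * (1 - (2:ℝ≥0∞) ^ (δ - 1))⁻¹) *
          (ENNReal.ofReal (4 * Real.sqrt d) ^ d * (3:ℝ≥0∞) ^ d) ^ δ +
        ((3:ℝ≥0∞) ^ d) ^ δ) * hlMax f x ^ δ := by
  set Q := cube c r with hQdef
  set g := (cube c (3 * r)).indicator f with hg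
  set A : ℝ≥0∞ := ENNReal.ofReal (4 * Real.sqrt d) ^ d with hA
  set C2 : ℝ≥0∞ := 1 + (2:ℝ≥0∞) ^ δ * (1 - (2:ℝ≥0∞) ^ (δ - 1))⁻¹ with hC2
  have hQ0 : volume Q ≠ 0 := (volume_cube_pos c hr).ne'
  have hQtop : volume Q ≠ ∞ := volume_cube_ne_top c r
  have h3r : (0:ℝ) < 3 * r := by linarith
  have hgle : ∀ z, g z ≤ f z := fun z => Set.indicator_le_self _ _ z
  have hfin_g : ∀ᵐ y ∂(volume : Measure (Rd d)), hlMax g y ≠ ∞ := by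
    filter_upwards [hfin] with y hy
    exact fun h => hy (top_le_iff.1 (h ▸ hlMax_mono hgle y))
  have hIg : (∫⁻ z, g z) = ∫⁻ z in cube c (3 * r), f z := by
    rw [hg, lintegral_indicator (measurableSet_cube c (3 * r))]
  have hIgtop : (∫⁻ z, g z) ≠ ∞ := by
    rw [hIg]; exact lintegral_cube_ne_top hd f hfin c h3r
  -- pointwise bound on Q
  have hpt : ∀ y ∈ Q, hlMax f y ^ δ ≤ hlMax g y ^ δ + ((3:ℝ≥0∞) ^ d * hlMax f x) ^ δ := by
    intro y hy
    calc hlMax f y ^ δ ≤ (hlMax g y + (3:ℝ≥0∞) ^ d * hlMax f x) ^ δ :=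
          ENNReal.rpow_le_rpow (hlMax_le_local_add f c x y hr hx hy) hδ0.le
      _ ≤ _ := ENNReal.rpow_add_le_add_rpow _ _ hδ0.le hδ1.le
  -- integral bound
  have hint : (∫⁻ y in Q, hlMax f y ^ δ) ≤
      (∫⁻ y in Q, hlMax g y ^ δ) + ((3:ℝ≥0∞) ^ d * hlMax f x) ^ δ * volume Q := by
    calc (∫⁻ y in Q, hlMax f y ^ δ)
        ≤ ∫⁻ y in Q, (hlMax g y ^ δ + ((3:ℝ≥0∞) ^ d * hlMax f x) ^ δ) := by
          refine lintegral_mono_ae ?_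
          filter_upwards [ae_restrict_mem (measurableSet_cube c r)] with y hy
          exact hpt y hy
      _ = _ := by
          rw [lintegral_add_right _ measurable_const, lintegral_const,
            Measure.restrict_apply_univ]
  -- Kolmogorov part
  have hkol : (∫⁻ y in Q, hlMax g y ^ δ) ≤
      (C2 * (A * (∫⁻ z, g z) / volume Q) ^ δ) * volume Q :=
    kolmogorov hd hδ0 hδ1 g hIgtop hfin_g c r hr
  -- bound the normalized integral of g by the maximal function at x
  have hAvg3 : A * (∫⁻ z, g z) / volume Q ≤ A * (3:ℝ≥0∞) ^ d * hlMax f x := by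
    have hV3 : volume (cube c (3 * r)) = (3:ℝ≥0∞) ^ d * volume Q := by
      rw [hQdef, volume_cube c (3 * r) h3r.le, volume_cube c r hr.le,
        show 2 * (3 * r) = 3 * (2 * r) by ring, ENNReal.ofReal_mul (by norm_num), mul_pow]
      norm_num
    have h1 : (∫⁻ z, g z) / volume Q =
        (3:ℝ≥0∞) ^ d * ((∫⁻ z, g z) / volume (cube c (3 * r))) := by
      rw [hV3, ← mul_div_assoc,
        ENNReal.mul_div_mul_left _ _ (pow_ne_zero d (by norm_num)) (pow_ne_top (by norm_num))]
    have h2 : (∫⁻ z, g z) / volume (cube c (3 * r)) ≤ hlMax f x := by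
      rw [hIg]
      exact le_hlMax h3r (cube_subset_cube c (by linarith) hx)
    calc A * (∫⁻ z, g z) / volume Q = A * ((∫⁻ z, g z) / volume Q) := by
          rw [mul_div_assoc]
      _ = A * ((3:ℝ≥0∞) ^ d * ((∫⁻ z, g z) / volume (cube c (3 * r)))) := by rw [h1]
      _ ≤ A * ((3:ℝ≥0∞) ^ d * hlMax f x) := by
          exact mul_le_mul_right (mul_le_mul_right h2 _) _
      _ = A * (3:ℝ≥0∞) ^ d * hlMax f x := by ring
  -- put everything together
  rw [avg, ENNReal.div_le_iff hQ0 hQtop]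
  calc (∫⁻ y in Q, hlMax f y ^ δ)
      ≤ (C2 * ((A * ∫⁻ z, g z) / volume Q) ^ δ) * volume Q +
          ((3:ℝ≥0∞) ^ d * hlMax f x) ^ δ * volume Q :=
        hint.trans (add_le_add_left hkol _)
    _ ≤ (C2 * (A * (3:ℝ≥0∞) ^ d * hlMax f x) ^ δ) * volume Q +
          ((3:ℝ≥0∞) ^ d * hlMax f x) ^ δ * volume Q := by
        apply add_le_add_left
        apply mul_le_mul_left
        apply mul_le_mul_right
        exact ENNReal.rpow_le_rpow hAvg3 hδ0.le
    _ = _ := by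
        rw [ENNReal.mul_rpow_of_nonneg (A * (3:ℝ≥0∞) ^ d) (hlMax f x) hδ0.le,
          ENNReal.mul_rpow_of_nonneg ((3:ℝ≥0∞) ^ d) (hlMax f x) hδ0.le]
        ring

lemma div_mul_div_ennreal (a b c e : ℝ≥0∞) (hc : c ≠ 0) (hc' : c ≠ ∞) (he : e ≠ 0)
    (he' : e ≠ ∞) : (a * b) / (c * e) = (a / c) * (b / e) := by
  rw [div_eq_mul_inv, div_eq_mul_inv, div_eq_mul_inv,
    ENNReal.mul_inv (Or.inl hc) (Or.inl hc')]
  ring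

end A1

open A1 Set Metric

/-- products of powers of maximal functions are `A_1` weights:
for `1 < s_1, s_2 < ∞` with `1/s_1 + 1/s_2 < 1`, there is a constant `C` (depending only
on `d, s_1, s_2`) such that for all `f_1, f_2` with `M f_i` finite a.e., every cube `Q`
and a.e. `x ∈ Q`:
`⟨M(f_1)^{1/s_1} M(f_2)^{1/s_2}⟩_Q ≤ C · M(f_1)(x)^{1/s_1} M(f_2)(x)^{1/s_2}`. -/
theorem prod_maximal_pow_is_A1
    (d : ℕ) (hd : 0 < d) (s1 s2 : ℝ)
    (hs1 : 1 < s1) (hs2 : 1 < s2) (hs : 1 / s1 + 1 / s2 < 1) :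
    ∃ C : ℝ≥0∞, C ≠ ∞ ∧
      ∀ f1 f2 : Rd d → ℝ≥0∞,
        (∀ᵐ x ∂(volume : Measure (Rd d)), hlMax f1 x ≠ ∞) →
        (∀ᵐ x ∂(volume : Measure (Rd d)), hlMax f2 x ≠ ∞) →
        ∀ c : Rd d, ∀ r : ℝ, 0 < r →
          ∀ᵐ x ∂(volume.restrict (cube c r)),
            avg (cube c r) (fun y => hlMax f1 y ^ (1 / s1) * hlMax f2 y ^ (1 / s2)) ≤
              C * (hlMax f1 x ^ (1 / s1) * hlMax f2 x ^ (1 / s2)) := by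
  set a : ℝ := 1 / s1 with ha
  set b : ℝ := 1 / s2 with hb
  have ha0 : 0 < a := by rw [ha]; positivity
  have hb0 : 0 < b := by rw [hb]; positivity
  set δ : ℝ := a + b with hδ
  have hδ0 : 0 < δ := by positivity
  have hδ1 : δ < 1 := hs
  set p : ℝ := δ / a with hp
  set q : ℝ := δ / b with hq
  have hpq : p.HolderConjugate q := by
    rw [Real.holderConjugate_iff]
    constructor
    · rw [hp, hδ]
      rw [lt_div_iff₀ ha0]
      linarith
    · rw [hp, hq]
      field_simp
      exact hδ.symm
  set C3 : ℝ≥0∞ := (1 + (2:ℝ≥0∞) ^ δ * (1 - (2:ℝ≥0∞) ^ (δ - 1))⁻¹) *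
      (ENNReal.ofReal (4 * Real.sqrt d) ^ d * (3:ℝ≥0∞) ^ d) ^ δ +
    ((3:ℝ≥0∞) ^ d) ^ δ with hC3
  have hC3top : C3 ≠ ∞ := by
    rw [hC3]
    apply ENNReal.add_ne_top.2
    constructor
    · apply ENNReal.mul_ne_top
      · apply ENNReal.add_ne_top.2
        exact ⟨one_ne_top, ENNReal.mul_ne_top
          (ENNReal.rpow_ne_top_of_nonneg hδ0.le ENNReal.ofNat_ne_top) (geom_ne_top hδ1)⟩
      · exact ENNReal.rpow_ne_top_of_nonneg hδ0.le
          (ENNReal.mul_ne_top (pow_ne_top ofReal_ne_top) (pow_ne_top (by norm_num)))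
    · exact ENNReal.rpow_ne_top_of_nonneg hδ0.le (pow_ne_top (by norm_num))
  have hC30 : C3 ≠ 0 := by
    rw [hC3]
    intro h
    rw [add_eq_zero] at h
    have := h.2
    rw [ENNReal.rpow_eq_zero_iff] at this
    rcases this with ⟨h1, _⟩ | ⟨h1, _⟩
    · exact pow_ne_zero d (by norm_num : (3:ℝ≥0∞) ≠ 0) h1
    · exact (pow_ne_top (by norm_num : (3:ℝ≥0∞) ≠ ∞)) h1
  refine ⟨C3, hC3top, fun f1 f2 hfin1 hfin2 c r hr => ?_⟩
  rw [ae_restrict_iff' (measurableSet_cube c r)]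
  refine ae_of_all _ fun x hx => ?_
  set Q := cube c r with hQdef
  have hQ0 : volume Q ≠ 0 := (volume_cube_pos c hr).ne'
  have hQtop : volume Q ≠ ∞ := volume_cube_ne_top c r
  set M1 := hlMax f1 with hM1
  set M2 := hlMax f2 with hM2
  have hmeas1 : Measurable fun y => M1 y ^ a := (measurable_hlMax f1).pow_const a
  have hmeas2 : Measurable fun y => M2 y ^ b := (measurable_hlMax f2).pow_const b
  have hpow1 : ∀ y, (M1 y ^ a) ^ p = M1 y ^ δ := fun y => by
    rw [← ENNReal.rpow_mul]
    congr 1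
    rw [hp]
    field_simp
  have hpow2 : ∀ y, (M2 y ^ b) ^ q = M2 y ^ δ := fun y => by
    rw [← ENNReal.rpow_mul]
    congr 1
    rw [hq]
    field_simp
  have hone : 1 / p + 1 / q = 1 := by
    have := hpq.inv_add_inv_eq_one
    rwa [one_div, one_div]
  have hQsplit : volume Q = volume Q ^ (1 / p) * volume Q ^ (1 / q) := by
    rw [← ENNReal.rpow_add _ _ hQ0 hQtop, hone, ENNReal.rpow_one]
  have hQp0 : volume Q ^ (1 / p) ≠ 0 := by
    simp [ENNReal.rpow_eq_zero_iff, hQ0, hQtop]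
  have hQptop : volume Q ^ (1 / p) ≠ ∞ := by
    simp [ENNReal.rpow_eq_top_iff, hQ0, hQtop]
  have hQq0 : volume Q ^ (1 / q) ≠ 0 := by
    simp [ENNReal.rpow_eq_zero_iff, hQ0, hQtop]
  have hQqtop : volume Q ^ (1 / q) ≠ ∞ := by
    simp [ENNReal.rpow_eq_top_iff, hQ0, hQtop]
  have hHolder : (∫⁻ y in Q, M1 y ^ a * M2 y ^ b) ≤
      (∫⁻ y in Q, M1 y ^ δ) ^ (1 / p) * (∫⁻ y in Q, M2 y ^ δ) ^ (1 / q) := by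
    have h := ENNReal.lintegral_mul_le_Lp_mul_Lq (volume.restrict Q) hpq
      hmeas1.aemeasurable hmeas2.aemeasurable
    simp only [Pi.mul_apply] at h
    calc (∫⁻ y in Q, M1 y ^ a * M2 y ^ b)
        ≤ (∫⁻ y in Q, (M1 y ^ a) ^ p) ^ (1 / p) * (∫⁻ y in Q, (M2 y ^ b) ^ q) ^ (1 / q) := h
      _ = _ := by
          congr 1
          · congr 1; exact lintegral_congr fun y => by rw [hpow1 y]
          · congr 1; exact lintegral_congr fun y => by rw [hpow2 y]
  have hcore1 : avg Q (fun y => M1 y ^ δ) ≤ C3 * M1 x ^ δ :=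
    core hd hδ0 hδ1 f1 hfin1 c r hr x hx
  have hcore2 : avg Q (fun y => M2 y ^ δ) ≤ C3 * M2 x ^ δ :=
    core hd hδ0 hδ1 f2 hfin2 c r hr x hx
  calc avg Q (fun y => M1 y ^ a * M2 y ^ b)
      ≤ ((∫⁻ y in Q, M1 y ^ δ) ^ (1 / p) * (∫⁻ y in Q, M2 y ^ δ) ^ (1 / q)) / volume Q := by
        rw [avg]
        exact ENNReal.div_le_div_right hHolder _
    _ = avg Q (fun y => M1 y ^ δ) ^ (1 / p) * avg Q (fun y => M2 y ^ δ) ^ (1 / q) := by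
        rw [avg, avg,
          ENNReal.div_rpow_of_nonneg _ _ (by positivity : (0:ℝ) ≤ 1/p),
          ENNReal.div_rpow_of_nonneg _ _ (by positivity : (0:ℝ) ≤ 1/q),
          ← div_mul_div_ennreal _ _ _ _ hQp0 hQptop hQq0 hQqtop, ← hQsplit]
    _ ≤ (C3 * M1 x ^ δ) ^ (1 / p) * (C3 * M2 x ^ δ) ^ (1 / q) :=
        mul_le_mul' (ENNReal.rpow_le_rpow hcore1 (by positivity))
          (ENNReal.rpow_le_rpow hcore2 (by positivity))
    _ = C3 * (M1 x ^ a * M2 x ^ b) := by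
        rw [ENNReal.mul_rpow_of_nonneg _ _ (by positivity : (0:ℝ) ≤ 1/p),
          ENNReal.mul_rpow_of_nonneg _ _ (by positivity : (0:ℝ) ≤ 1/q),
          ← ENNReal.rpow_mul (M1 x), ← ENNReal.rpow_mul (M2 x),
          show δ * (1 / p) = a by rw [hp]; field_simp,
          show δ * (1 / q) = b by rw [hq]; field_simp]
        calc C3 ^ (1/p) * M1 x ^ a * (C3 ^ (1/q) * M2 x ^ b)
            = (C3 ^ (1/p) * C3 ^ (1/q)) * (M1 x ^ a * M2 x ^ b) := by ring
          _ = C3 * (M1 x ^ a * M2 x ^ b) := by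
              rw [← ENNReal.rpow_add _ _ hC30 hC3top, hone, ENNReal.rpow_one]
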